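/- Assume the fundamental unit ε of F does not generate F (i.e., ℚ(ε) ≠ F) and 1 < |σ(ε)| < 1 + √2. Then ℚ(ε) is a real quadratic subfield of F isomorphic to ℚ(√5), one has |σ(ε)| = (1+√5)/2, and O_F contains no element x with N(x) = 2 or N(x) = 3. -/

import Mathlib

open NumberField nonZeroDivisors MeasureTheory

noncomputable section

/-- `‖ux‖² = 2u₁²|σ(x)|² + 2u₂²|σ'(x)|²` for `u = (u₁, u₂)`. -/
def normSq2 {F : Type*} [Field F] (σ σ' : F →+* ℂ) (u₁ u₂ : ℝ) (x : F) : ℝ :=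
  2 * u₁ ^ 2 * ‖σ x‖ ^ 2 + 2 * u₂ ^ 2 * ‖σ' x‖ ^ 2

/-- `N(x) = |σ(x)|²·|σ'(x)|²`, the absolute value of the norm of `x`. -/
def absN {F : Type*} [Field F] (σ σ' : F →+* ℂ) (x : F) : ℝ :=
  ‖σ x‖ ^ 2 * ‖σ' x‖ ^ 2

/-- `ε` is a fundamental unit: every unit is `ζ · εᵏ` with `ζ` a root of unity. -/
def IsFundamentalUnit {F : Type*} [Field F] [NumberField F] (ε : (𝓞 F)ˣ) : Prop :=
  ∀ u : (𝓞 F)ˣ, ∃ (ζ : (𝓞 F)ˣ) (k : ℤ), (∃ n : ℕ, 0 < n ∧ ζ ^ n = 1) ∧ u = ζ * ε ^ k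

/-!
The minimal polynomial of the unit `ε` over `ℤ` is `X² + aX + b` with `b = ±1`, because the
degree-2 subfield `ℚ(ε)` satisfies `x² - Tr(x)·x + N(x) = 0` and `N(ε)` is a unit of `ℤ`.
The window `1 < |σ ε| < 1 + √2` forces `σ ε` to be real and `a² - 4b = 5`, so `|σ ε|` is the
golden ratio and `δ = 2ε + a` is a square root of `5` generating `ℚ(ε)`. Writing `y ∈ ℚ(√5)` as
`s + t√5`, the integers `u = Tr y = 2s` and `v = Tr (√5 y) = 10t` satisfy `v² = 5(u² - 4 N(y))`,
so `u² ≡ 4 N(y) mod 5`; as `4m` is not a square mod `5` for `m = ±2, ±3`, no integral `y` has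
such a norm, and neither has any `x ∈ 𝓞 F`, since `N_{F/ℚ} = N_{ℚ(√5)/ℚ} ∘ N_{F/ℚ(√5)}`.
-/

open Polynomial IntermediateField Module

theorem Algebra.sq_sub_trace_mul_add_norm_eq_zero {K L : Type*} [Field K] [Field L]
    [Algebra K L] (h : finrank K L = 2) (x : L) :
    x ^ 2 - algebraMap K L (Algebra.trace K L x) * x + algebraMap K L (Algebra.norm K x) = 0 := by
  have : FiniteDimensional K L := Module.finite_of_finrank_eq_succ h
  let b := Module.finBasisOfFinrankEq K L h
  apply Algebra.leftMulMatrix_injective b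
  have hCH := (Algebra.leftMulMatrix b x).aeval_self_charpoly
  rw [Matrix.charpoly_fin_two] at hCH
  rw [Algebra.trace_eq_matrix_trace b, Algebra.norm_eq_matrix_det b]
  simpa [Algebra.algebraMap_eq_smul_one] using hCH

theorem Rat.eq_one_or_neg_one_of_isIntegral_of_mul_eq_one {q r : ℚ} (hq : IsIntegral ℤ q)
    (hr : IsIntegral ℤ r) (h : q * r = 1) : q = 1 ∨ q = -1 := by
  obtain ⟨m, rfl⟩ := IsIntegrallyClosed.isIntegral_iff.mp hq
  obtain ⟨n, rfl⟩ := IsIntegrallyClosed.isIntegral_iff.mp hr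
  simp only [algebraMap_int_eq, eq_intCast] at h ⊢
  rcases Int.eq_one_or_neg_one_of_mul_eq_one (by exact_mod_cast h : m * n = 1) with rfl | rfl <;>
    simp

theorem Rat.sq_ne_five (q : ℚ) : q ^ 2 ≠ 5 := by
  intro h
  have : IsSquare (5 : ℚ) := ⟨q, by rw [← h, sq]⟩
  norm_num at this

theorem isIntegral_of_sq_eq_five {R A : Type*} [CommRing R] [Ring A] [Algebra R A] {d : A}
    (hd : d ^ 2 = 5) : IsIntegral R d :=
  ⟨X ^ 2 - C 5, monic_X_pow_sub_C _ two_ne_zero, by simp [hd, map_ofNat]⟩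

theorem minpoly_eq_X_sq_sub_five {A : Type*} [Ring A] [Nontrivial A] [Algebra ℚ A] {d : A}
    (hd : d ^ 2 = 5) : minpoly ℚ d = X ^ 2 - C 5 :=
  (minpoly.eq_of_irreducible_of_monic
    (X_pow_sub_C_irreducible_of_prime Nat.prime_two Rat.sq_ne_five)
    (by simp [hd, map_ofNat]) (monic_X_pow_sub_C _ two_ne_zero)).symm

section AdjoinSqrtFive

variable {A B : Type*} [Field A] [CharZero A] [Field B] [CharZero B] {d : A} {e : B}

theorem finrank_adjoin_of_sq_eq_five (hd : d ^ 2 = 5) : finrank ℚ ℚ⟮d⟯ = 2 := by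
  rw [adjoin.finrank (isIntegral_of_sq_eq_five hd), minpoly_eq_X_sq_sub_five hd,
    natDegree_X_pow_sub_C]

theorem nonempty_algEquiv_adjoin_of_sq_eq_five (hd : d ^ 2 = 5) (he : e ^ 2 = 5) :
    Nonempty (ℚ⟮d⟯ ≃ₐ[ℚ] ℚ⟮e⟯) := by
  have hmp : minpoly ℚ d = minpoly ℚ e := by
    rw [minpoly_eq_X_sq_sub_five hd, minpoly_eq_X_sq_sub_five he]
  exact ⟨(adjoinRootEquivAdjoin ℚ (isIntegral_of_sq_eq_five hd)).symm.trans <|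
    (AdjoinRoot.algEquivOfEq _ _ _ hmp).trans
      (adjoinRootEquivAdjoin ℚ (isIntegral_of_sq_eq_five he))⟩

end AdjoinSqrtFive

section QuadraticSqrtFive

variable {L : Type*} [Field L] [Algebra ℚ L] {d : L}

theorem eq_zero_of_add_mul_eq_zero_of_sq_eq_five (hd : d ^ 2 = 5) {s t : ℚ}
    (h : (s : L) + t * d = 0) : s = 0 ∧ t = 0 := by
  have := algebraRat.charZero L
  obtain rfl | ht := eq_or_ne t 0
  · simpa using h
  · refine absurd ?_ (Rat.sq_ne_five (s / t))
    have hd' : d = -((s / t : ℚ) : L) := by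
      push_cast
      field_simp
      linear_combination h
    exact_mod_cast (neg_sq ((s / t : ℚ) : L)).symm.trans (hd' ▸ hd)

theorem linearIndependent_one_of_sq_eq_five (hd : d ^ 2 = 5) :
    LinearIndependent ℚ ![1, d] :=
  LinearIndependent.pair_iff.mpr fun _ _ hst =>
    eq_zero_of_add_mul_eq_zero_of_sq_eq_five hd (by simpa [Algebra.smul_def] using hst)

variable (hL : finrank ℚ L = 2) (hd : d ^ 2 = 5)
include hL hd

theorem exists_eq_add_mul_of_sq_eq_five (y : L) : ∃ s t : ℚ, (s : L) + t * d = y := by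
  have hspan := (linearIndependent_one_of_sq_eq_five hd).span_eq_top_of_card_eq_finrank
    (by simp [hL])
  rw [Matrix.range_cons_cons_empty] at hspan
  obtain ⟨s, t, hst⟩ := Submodule.mem_span_pair.mp (hspan ▸ Submodule.mem_top (x := y))
  exact ⟨s, t, by simpa [Algebra.smul_def] using hst⟩

theorem trace_of_sq_eq_five : Algebra.trace ℚ L d = 0 := by
  have := algebraRat.charZero L
  have h := Algebra.sq_sub_trace_mul_add_norm_eq_zero hL d
  rw [hd] at h
  refine neg_eq_zero.mp (eq_zero_of_add_mul_eq_zero_of_sq_eq_five hd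
    (s := 5 + Algebra.norm ℚ d) ?_).2
  simp only [eq_ratCast] at h
  push_cast
  linear_combination h

theorem trace_add_mul_of_sq_eq_five (s t : ℚ) :
    Algebra.trace ℚ L ((s : L) + t * d) = 2 * s := by
  rw [← eq_ratCast (algebraMap ℚ L), ← eq_ratCast (algebraMap ℚ L), map_add, ← Algebra.smul_def,
    map_smul, Algebra.trace_algebraMap, trace_of_sq_eq_five hL hd, hL]
  simp [mul_comm]

theorem norm_add_mul_of_sq_eq_five (s t : ℚ) :
    Algebra.norm ℚ ((s : L) + t * d) = s ^ 2 - 5 * t ^ 2 := by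
  have := algebraRat.charZero L
  have h := Algebra.sq_sub_trace_mul_add_norm_eq_zero hL ((s : L) + t * d)
  rw [trace_add_mul_of_sq_eq_five hL hd] at h
  apply (algebraMap ℚ L).injective
  simp only [eq_ratCast] at h ⊢
  push_cast at h ⊢
  linear_combination h - t ^ 2 * hd

theorem exists_sq_eq_five_mul_sq_sub_four_mul_norm {y : L} (hy : IsIntegral ℤ y) :
    ∃ u v : ℤ, (v : ℚ) ^ 2 = 5 * ((u : ℚ) ^ 2 - 4 * Algebra.norm ℚ y) := by
  have := algebraRat.charZero L
  have : FiniteDimensional ℚ L := Module.finite_of_finrank_eq_succ hL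
  obtain ⟨s, t, rfl⟩ := exists_eq_add_mul_of_sq_eq_five hL hd y
  have hdy : d * ((s : L) + t * d) = ((5 * t : ℚ) : L) + s * d := by
    push_cast
    linear_combination t * hd
  obtain ⟨u, hu⟩ := IsIntegrallyClosed.isIntegral_iff.mp (Algebra.isIntegral_trace (L := ℚ) hy)
  obtain ⟨v, hv⟩ := IsIntegrallyClosed.isIntegral_iff.mp
    (Algebra.isIntegral_trace (L := ℚ) ((isIntegral_of_sq_eq_five (R := ℤ) hd).mul hy))
  rw [hdy, trace_add_mul_of_sq_eq_five hL hd] at hv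
  rw [trace_add_mul_of_sq_eq_five hL hd] at hu
  refine ⟨u, v, ?_⟩
  simp only [algebraMap_int_eq, eq_intCast] at hu hv
  rw [hu, hv, norm_add_mul_of_sq_eq_five hL hd]
  ring

end QuadraticSqrtFive

theorem Int.sq_ne_five_mul_sq_sub_four_mul {u v m : ℤ} (hm : m % 5 = 2 ∨ m % 5 = 3) :
    v ^ 2 ≠ 5 * (u ^ 2 - 4 * m) := by
  intro h
  obtain ⟨w, rfl⟩ : (5 : ℤ) ∣ v :=
    (by norm_num : Prime (5 : ℤ)).dvd_of_dvd_pow (Dvd.intro _ h.symm)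
  have h5 : (5 : ZMod 5) = 0 := by decide
  have hz : (u : ZMod 5) ^ 2 = 4 * ((m % 5 : ℤ) : ZMod 5) := by
    rw [show ((m % 5 : ℤ) : ZMod 5) = m from ZMod.intCast_mod m 5]
    have h' := congrArg (Int.cast : ℤ → ZMod 5) (by linarith : u ^ 2 - 4 * m = 5 * w ^ 2)
    push_cast at h'
    linear_combination h' + (w : ZMod 5) ^ 2 * h5
  rcases hm with hm | hm <;> rw [hm] at hz <;> revert hz <;> generalize (u : ZMod 5) = x <;>
    revert x <;> decide

theorem abs_norm_ne_of_sq_eq_five {F : Type*} [Field F] [NumberField F] {d : F}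
    (hd : d ^ 2 = 5) {x : F} (hx : IsIntegral ℤ x) {m : ℤ} (hm : m % 5 = 2 ∨ m % 5 = 3) :
    |Algebra.norm ℚ x| ≠ m := by
  intro hxm
  have hgen : AdjoinSimple.gen ℚ d ^ 2 = 5 := (algebraMap ℚ⟮d⟯ F).injective (by simp [hd]; rfl)
  obtain ⟨u, v, huv⟩ := exists_sq_eq_five_mul_sq_sub_four_mul_norm
    (finrank_adjoin_of_sq_eq_five hd) hgen (Algebra.isIntegral_norm ℚ⟮d⟯ hx)
  rw [Algebra.norm_norm] at huv
  rcases (abs_eq (hxm ▸ abs_nonneg _)).mp hxm with h | h <;> rw [h] at huv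
  · exact Int.sq_ne_five_mul_sq_sub_four_mul hm (by exact_mod_cast huv)
  · exact Int.sq_ne_five_mul_sq_sub_four_mul (m := -m) (by omega) (by exact_mod_cast huv)

theorem IntermediateField.finrank_eq_two_of_ne_bot_of_ne_top {K F : Type*} [Field K] [Field F]
    [Algebra K F] (h4 : finrank K F = 4) {E : IntermediateField K F} (hbot : E ≠ ⊥)
    (htop : E ≠ ⊤) : finrank K E = 2 := by
  have : FiniteDimensional K F := Module.finite_of_finrank_eq_succ h4
  have hmul := Module.finrank_mul_finrank K E F
  have h1 : finrank K E ≠ 1 := fun h => hbot (finrank_eq_one_iff.mp h)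
  have h4' : finrank E F ≠ 1 := fun h => htop (finrank_eq_one_iff_eq_top.mp h)
  rw [h4] at hmul
  have : finrank K E ≤ 4 := Nat.le_of_dvd (by norm_num) (Dvd.intro _ hmul)
  interval_cases finrank K E <;> omega

section IntegralUnit

variable {F : Type*} [Field F] [CharZero F] {ε : F} (hε : IsIntegral ℤ ε)
  (hε' : IsIntegral ℤ ε⁻¹)
include hε hε'

theorem eq_one_or_neg_one_of_adjoin_eq_bot (h0 : ε ≠ 0) (hbot : ℚ⟮ε⟯ = ⊥) :
    ε = 1 ∨ ε = -1 := by
  obtain ⟨r, rfl⟩ := adjoin_simple_eq_bot_iff.mp hbot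
  have hinj := (algebraMap ℚ F).injective
  rw [← map_inv₀] at hε'
  have hr0 : r ≠ 0 := by rintro rfl; simp at h0
  rcases Rat.eq_one_or_neg_one_of_isIntegral_of_mul_eq_one
    ((isIntegral_algebraMap_iff hinj).mp hε) ((isIntegral_algebraMap_iff hinj).mp hε')
    (mul_inv_cancel₀ hr0) with rfl | rfl <;> simp

theorem exists_sq_add_mul_add_eq_zero_of_finrank_adjoin_eq_two (h2 : finrank ℚ ℚ⟮ε⟯ = 2) :
    ∃ a b : ℤ, (b = 1 ∨ b = -1) ∧ ε ^ 2 + a * ε + b = 0 := by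
  have : FiniteDimensional ℚ ℚ⟮ε⟯ := Module.finite_of_finrank_eq_succ h2
  have hinj := (algebraMap ℚ⟮ε⟯ F).injective
  set g := AdjoinSimple.gen ℚ ε
  have hg : IsIntegral ℤ g := (isIntegral_algebraMap_iff hinj).mp (by simpa [g] using hε)
  have hg' : IsIntegral ℤ g⁻¹ := (isIntegral_algebraMap_iff hinj).mp (by simpa [g] using hε')
  have hg0 : g ≠ 0 := by
    rintro hg0
    have : ε = 0 := by simpa [g] using congrArg (algebraMap ℚ⟮ε⟯ F) hg0
    rw [this, adjoin_zero] at h2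
    exact absurd (h2.symm.trans IntermediateField.finrank_bot) (by norm_num)
  obtain ⟨a, ha⟩ := IsIntegrallyClosed.isIntegral_iff.mp (Algebra.isIntegral_trace (L := ℚ) hg)
  obtain ⟨b, hb⟩ := IsIntegrallyClosed.isIntegral_iff.mp (Algebra.isIntegral_norm ℚ hg)
  simp only [algebraMap_int_eq, eq_intCast] at ha hb
  refine ⟨-a, b, ?_, ?_⟩
  · have := Rat.eq_one_or_neg_one_of_isIntegral_of_mul_eq_one (Algebra.isIntegral_norm ℚ hg)
      (Algebra.isIntegral_norm ℚ hg') (by rw [← map_mul, mul_inv_cancel₀ hg0, map_one])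
    rw [← hb] at this
    exact_mod_cast this
  · have h := congrArg (algebraMap ℚ⟮ε⟯ F) (Algebra.sq_sub_trace_mul_add_norm_eq_zero h2 g)
    rw [← ha, ← hb] at h
    simpa [g, sub_eq_add_neg] using h

end IntegralUnit

theorem eq_goldenRatio_of_sq_eq_add_one {s : ℝ} (hs : 0 < s) (h : s ^ 2 = s + 1) :
    s = Real.goldenRatio := by
  have hfac : (s - Real.goldenRatio) * (s - Real.goldenConj) = 0 := by
    linear_combination h - (1 / 4) * Real.sq_sqrt (show (0 : ℝ) ≤ 5 by norm_num)
  have := Real.goldenConj_neg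
  exact sub_eq_zero.mp ((mul_eq_zero.mp hfac).resolve_right (by linarith))

theorem Complex.sq_norm_eq_of_sq_add_mul_add_eq_zero {t : ℂ} {a b : ℝ}
    (ht : t ^ 2 + a * t + b = 0) (him : t.im ≠ 0) : ‖t‖ ^ 2 = b := by
  have hre := congrArg Complex.re ht
  have him' := congrArg Complex.im ht
  simp only [sq, Complex.add_re, Complex.mul_re, Complex.ofReal_re, Complex.ofReal_im,
    Complex.add_im, Complex.mul_im, Complex.zero_re, Complex.zero_im] at hre him'
  have hx : 2 * t.re + a = 0 := mul_left_cancel₀ him (by linear_combination him')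
  rw [Complex.sq_norm, Complex.normSq_apply]
  linear_combination -hre + t.re * hx

theorem abs_eq_goldenRatio_of_sq_add_mul_add_eq_zero {x : ℝ} {a b : ℤ} (hb : b = 1 ∨ b = -1)
    (hx : x ^ 2 + a * x + b = 0) (h1 : 1 < |x|) (h2 : |x| < 1 + √2) :
    b = -1 ∧ a ^ 2 = 1 ∧ |x| = Real.goldenRatio := by
  have hx2 : x ^ 2 = |x| ^ 2 := (sq_abs x).symm
  -- `|x| ∈ (1, 1 + √2)` is exactly where `|x|² - 2|x| - 1 < 0 < |x|² + 2|x| - 1`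
  have hquartic : x ^ 4 - 6 * x ^ 2 + 1 < 0 := by
    have hfac : x ^ 4 - 6 * x ^ 2 + 1 = (|x| ^ 2 - 2 * |x| - 1) * (|x| ^ 2 + 2 * |x| - 1) := by
      rw [← hx2]; ring_nf; rw [hx2]; ring
    rw [hfac]
    apply mul_neg_of_neg_of_pos <;> nlinarith [mul_pos (sub_pos.mpr h1) (sub_pos.mpr h2),
      Real.sqrt_nonneg 2, Real.sq_sqrt (zero_le_two : (0 : ℝ) ≤ 2)]
  have hsq : (a : ℝ) ^ 2 * x ^ 2 = (x ^ 2 + b) ^ 2 := by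
    linear_combination (a * x - x ^ 2 - b) * hx
  have hxpos : 1 < x ^ 2 := by nlinarith
  rcases hb with rfl | rfl
  · exfalso
    push_cast at hsq
    have hlo : 4 < a ^ 2 := by
      have : (4 : ℝ) < a ^ 2 := by nlinarith
      exact_mod_cast this
    have hhi : a ^ 2 < 8 := by
      have : (a : ℝ) ^ 2 < 8 := by nlinarith
      exact_mod_cast this
    have : -3 < a := by nlinarith
    have : a < 3 := by nlinarith
    interval_cases a <;> norm_num at hlo
  · push_cast at hsq
    have hlo : 0 < a ^ 2 := by
      have : (0 : ℝ) < a ^ 2 := by nlinarith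
      exact_mod_cast this
    have hhi : a ^ 2 < 4 := by
      have : (a : ℝ) ^ 2 < 4 := by nlinarith
      exact_mod_cast this
    have ha : a ^ 2 = 1 := by
      have : -2 < a := by nlinarith
      have : a < 2 := by nlinarith
      have : a ≠ 0 := by rintro rfl; norm_num at hlo
      rcases (by omega : a = 1 ∨ a = -1) with rfl | rfl <;> norm_num
    refine ⟨rfl, ha, eq_goldenRatio_of_sq_eq_add_one (by linarith) ?_⟩
    rw [show (a : ℝ) ^ 2 = 1 by exact_mod_cast ha, one_mul, hx2] at hsq
    nlinarith

theorem norm_eq_goldenRatio_of_sq_add_mul_add_eq_zero {t : ℂ} {a b : ℤ} (hb : b = 1 ∨ b = -1)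
    (ht : t ^ 2 + a * t + b = 0) (h1 : 1 < ‖t‖) (h2 : ‖t‖ < 1 + √2) :
    b = -1 ∧ a ^ 2 = 1 ∧ ‖t‖ = Real.goldenRatio := by
  have him : t.im = 0 := by
    by_contra him
    have := Complex.sq_norm_eq_of_sq_add_mul_add_eq_zero (a := a) (b := b)
      (by exact_mod_cast ht) him
    rcases hb with rfl | rfl <;> push_cast at this <;> nlinarith
  have htre : t = (t.re : ℂ) := Complex.ext rfl (by simp [him])
  rw [htre, Complex.norm_real, Real.norm_eq_abs] at h1 h2 ⊢
  rw [htre] at ht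
  exact abs_eq_goldenRatio_of_sq_add_mul_add_eq_zero hb (by exact_mod_cast ht) h1 h2

theorem isTotallyComplex_of_forall_exists_im_ne_zero {K : Type*} [Field K]
    (h : ∀ φ : K →+* ℂ, ∃ x, (φ x).im ≠ 0) : IsTotallyComplex K where
  isComplex w := InfinitePlace.not_isReal_iff_isComplex.mp fun hw => by
    obtain ⟨x, hx⟩ := h w.embedding
    refine hx (Complex.conj_eq_iff_im.mp ?_)
    exact RingHom.congr_fun (ComplexEmbedding.isReal_iff.mp (InfinitePlace.isReal_iff.mp hw)) x

theorem absN_eq_abs_norm {F : Type*} [Field F] [NumberField F] [IsTotallyComplex F]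
    (h4 : finrank ℚ F = 4) {σ σ' : F →+* ℂ} (hne : InfinitePlace.mk σ ≠ InfinitePlace.mk σ')
    (x : F) : absN σ σ' x = |Algebra.norm ℚ x| := by
  classical
  have hcard : Fintype.card (InfinitePlace F) = 2 := by
    have := IsTotallyComplex.finrank F
    rw [InfinitePlace.card_eq_nrRealPlaces_add_nrComplexPlaces,
      IsTotallyComplex.nrRealPlaces_eq_zero]
    omega
  have huniv : (Finset.univ : Finset (InfinitePlace F)) =
      {InfinitePlace.mk σ, InfinitePlace.mk σ'} :=
    (Finset.eq_univ_of_card _ (by rw [Finset.card_pair hne, hcard])).symm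
  have := InfinitePlace.prod_eq_abs_norm x
  rw [huniv, Finset.prod_pair hne] at this
  simpa [absN, InfinitePlace.apply] using this

theorem stmt16_general
    (F K : Type*) [Field F] [NumberField F] [Field K]
    [Algebra K F]
    (hquartic : Module.finrank ℚ F = 4)
    (hKim : ∀ φ : K →+* ℂ, ∃ x, (φ x).im ≠ 0)
    (σ σ' : F →+* ℂ)
    (hplaces : InfinitePlace.mk σ ≠ InfinitePlace.mk σ')
    (ε : (𝓞 F)ˣ)
    (hgen : IntermediateField.adjoin ℚ {((ε : 𝓞 F) : F)} ≠ ⊤)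
    (hε1 : 1 < ‖σ ((ε : 𝓞 F) : F)‖)
    (hε2 : ‖σ ((ε : 𝓞 F) : F)‖ < 1 + Real.sqrt 2) :
    Module.finrank ℚ (IntermediateField.adjoin ℚ {((ε : 𝓞 F) : F)}) = 2 ∧
      Nonempty ((IntermediateField.adjoin ℚ {((ε : 𝓞 F) : F)}) ≃ₐ[ℚ]
        (IntermediateField.adjoin ℚ {Real.sqrt 5})) ∧
      ‖σ ((ε : 𝓞 F) : F)‖ = (1 + Real.sqrt 5) / 2 ∧
      ∀ x : 𝓞 F, absN σ σ' (x : F) ≠ 2 ∧ absN σ σ' (x : F) ≠ 3 := by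
  set e : F := ((ε : 𝓞 F) : F)
  have he : IsIntegral ℤ e := (ε : 𝓞 F).isIntegral_coe
  have he' : IsIntegral ℤ e⁻¹ := by simpa using ((ε⁻¹ : (𝓞 F)ˣ) : 𝓞 F).isIntegral_coe
  have hbot : ℚ⟮e⟯ ≠ ⊥ := fun hbot => by
    rcases eq_one_or_neg_one_of_adjoin_eq_bot he he' (by rintro h; norm_num [h] at hε1) hbot
      with h | h <;> simp [h] at hε1
  have hdeg := finrank_eq_two_of_ne_bot_of_ne_top hquartic hbot hgen
  obtain ⟨a, b, hb, hab⟩ := exists_sq_add_mul_add_eq_zero_of_finrank_adjoin_eq_two he he' hdeg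
  obtain ⟨rfl, ha, hgold⟩ := norm_eq_goldenRatio_of_sq_add_mul_add_eq_zero hb
    (by simpa using congrArg σ hab) hε1 hε2
  have hδ : (2 * e + a) ^ 2 = 5 := by
    have ha' : (a : F) ^ 2 = 1 := by exact_mod_cast congrArg (Int.cast : ℤ → F) ha
    push_cast at hab
    linear_combination 4 * hab + ha'
  have hadj : ℚ⟮2 * e + a⟯ = ℚ⟮e⟯ := eq_of_le_of_finrank_eq
    (adjoin_simple_le_iff.mpr (add_mem (mul_mem (ofNat_mem _ 2) (mem_adjoin_simple_self ℚ e))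
      (intCast_mem _ a))) ((finrank_adjoin_of_sq_eq_five hδ).trans hdeg.symm)
  have := isTotallyComplex_of_forall_exists_im_ne_zero hKim
  have := isTotallyComplex_of_algebra K F
  refine ⟨hdeg, hadj ▸ nonempty_algEquiv_adjoin_of_sq_eq_five hδ (Real.sq_sqrt (by norm_num)),
    hgold, fun x => ⟨?_, ?_⟩⟩ <;> rw [absN_eq_abs_norm hquartic hplaces]
  · exact_mod_cast abs_norm_ne_of_sq_eq_five hδ x.isIntegral_coe (m := 2) (by norm_num)
  · exact_mod_cast abs_norm_ne_of_sq_eq_five hδ x.isIntegral_coe (m := 3) (by norm_num)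

theorem stmt16
    (F K : Type*) [Field F] [NumberField F] [Field K] [NumberField K]
    [Algebra K F] [IsScalarTower ℚ K F]
    (hquartic : Module.finrank ℚ F = 4)
    (hquad : Module.finrank K F = 2)
    (hKim : ∀ φ : K →+* ℂ, ∃ x, (φ x).im ≠ 0)
    (σ σ' : F →+* ℂ)
    (hplaces : InfinitePlace.mk σ ≠ InfinitePlace.mk σ')
    (ε : (𝓞 F)ˣ) (hfund : IsFundamentalUnit ε)
    (hgen : IntermediateField.adjoin ℚ {((ε : 𝓞 F) : F)} ≠ ⊤)
    (hε1 : 1 < ‖σ ((ε : 𝓞 F) : F)‖)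
    (hε2 : ‖σ ((ε : 𝓞 F) : F)‖ < 1 + Real.sqrt 2) :
    Module.finrank ℚ (IntermediateField.adjoin ℚ {((ε : 𝓞 F) : F)}) = 2 ∧
      Nonempty ((IntermediateField.adjoin ℚ {((ε : 𝓞 F) : F)}) ≃ₐ[ℚ]
        (IntermediateField.adjoin ℚ {Real.sqrt 5})) ∧
      ‖σ ((ε : 𝓞 F) : F)‖ = (1 + Real.sqrt 5) / 2 ∧
      ∀ x : 𝓞 F, absN σ σ' (x : F) ≠ 2 ∧ absN σ σ' (x : F) ≠ 3 :=
  stmt16_general F K hquartic hKim σ σ' hplaces ε hgen hε1 hε2
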